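/- arXiv:1205.3521 — 4 statements merged into one kernel-verified Lean document; each statement's English description precedes it below -/
import Mathlib

section
/- Let σ ∈ [0,1), β ∈ ℝ, U > 0 with -U < β, and M > 0. Suppose H : ℝ → ℝ is continuous on the closed interval [-U, β] and satisfies the H1-estimate: |H(u) - H(û)| ≤ (M / ((β - u)^σ + (β - û)^σ)) · |u - û| for all u, û ∈ [-U, β). Then H is Hölder continuous with exponent 1 - σ and constant M on [-U, β]: |H(u) - H(û)| ≤ M · |u - û|^{1-σ} for all u, û ∈ [-U, β]. -/
/-!
Since `|u - û| ≤ max (β - u) (β - û)`, the weight `(β - u)^σ + (β - û)^σ` is at least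
`|u - û|^σ`, so the H1-estimate gives `|H u - H û| ≤ M |u - û|^(1-σ)` on `[-U, β)`.
Both sides are continuous on `[-U, β]²`, the closure of `[-U, β)²`, so the bound extends to it.
-/

open Set

namespace Real

variable {σ β x y : ℝ}

lemma abs_sub_rpow_le_rpow_sub_add_rpow_sub (hσ : 0 ≤ σ) (hx : x ≤ β) (hy : y ≤ β) :
    |x - y| ^ σ ≤ (β - x) ^ σ + (β - y) ^ σ := by
  have hx' : 0 ≤ (β - x) ^ σ := rpow_nonneg (by linarith) σ
  have hy' : 0 ≤ (β - y) ^ σ := rpow_nonneg (by linarith) σ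
  rcases le_total x y with hxy | hxy
  · have : |x - y| ^ σ ≤ (β - x) ^ σ :=
      rpow_le_rpow (abs_nonneg _) (by rw [abs_sub_comm, abs_of_nonneg] <;> linarith) hσ
    linarith
  · have : |x - y| ^ σ ≤ (β - y) ^ σ :=
      rpow_le_rpow (abs_nonneg _) (by rw [abs_of_nonneg] <;> linarith) hσ
    linarith

lemma div_rpow_sub_add_rpow_sub_mul_abs_sub_le {M : ℝ} (hM : 0 ≤ M) (hσ : 0 ≤ σ)
    (hx : x ≤ β) (hy : y ≤ β) :
    M / ((β - x) ^ σ + (β - y) ^ σ) * |x - y| ≤ M * |x - y| ^ (1 - σ) := by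
  rcases (abs_nonneg (x - y)).eq_or_lt with hd | hd
  · rw [← hd, mul_zero]
    exact mul_nonneg hM (rpow_nonneg le_rfl _)
  calc M / ((β - x) ^ σ + (β - y) ^ σ) * |x - y|
      ≤ M / |x - y| ^ σ * |x - y| := by
        gcongr
        exact abs_sub_rpow_le_rpow_sub_add_rpow_sub hσ hx hy
    _ = M * |x - y| ^ (1 - σ) := by
        rw [rpow_sub hd, rpow_one]
        field_simp

end Real

theorem holder_of_H1_estimate_general
    (σ β U M : ℝ) (hσ0 : 0 ≤ σ) (hσ1 : σ < 1)
    (hUβ : -U < β) (hM : 0 < M)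
    (H : ℝ → ℝ)
    (hcont : ContinuousOn H (Set.Icc (-U) β))
    (hest : ∀ u ∈ Set.Ico (-U) β, ∀ u' ∈ Set.Ico (-U) β,
      |H u - H u'| ≤ (M / ((β - u) ^ σ + (β - u') ^ σ)) * |u - u'|) :
    ∀ u ∈ Set.Icc (-U) β, ∀ u' ∈ Set.Icc (-U) β,
      |H u - H u'| ≤ M * |u - u'| ^ (1 - σ) := by
  have hclosure : closure (Ico (-U) β ×ˢ Ico (-U) β) = Icc (-U) β ×ˢ Icc (-U) β := by
    rw [closure_prod_eq, closure_Ico hUβ.ne]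
  have hholder : ∀ p ∈ Ico (-U) β ×ˢ Ico (-U) β, |H p.1 - H p.2| ≤ M * |p.1 - p.2| ^ (1 - σ) :=
    fun p ⟨hp₁, hp₂⟩ => (hest p.1 hp₁ p.2 hp₂).trans
      (Real.div_rpow_sub_add_rpow_sub_mul_abs_sub_le hM.le hσ0 hp₁.2.le hp₂.2.le)
  have hlhs : ContinuousOn (fun p : ℝ × ℝ => |H p.1 - H p.2|) (Icc (-U) β ×ˢ Icc (-U) β) :=
    ((hcont.comp continuousOn_fst fun _ hp => hp.1).sub
      (hcont.comp continuousOn_snd fun _ hp => hp.2)).abs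
  have hrhs : Continuous fun p : ℝ × ℝ => M * |p.1 - p.2| ^ (1 - σ) :=
    continuous_const.mul ((continuous_fst.sub continuous_snd).abs.rpow_const
      fun _ => Or.inr (by linarith))
  intro u hu u' hu'
  exact le_on_closure (x := (u, u')) hholder (hclosure ▸ hlhs) hrhs.continuousOn
    (hclosure ▸ ⟨hu, hu'⟩)

/-- A function satisfying the H1-estimate near the upper threshold β
is Hölder continuous with exponent 1 - σ and constant M on [-U, β]. -/
theorem holder_of_H1_estimate
    (σ β U M : ℝ) (hσ0 : 0 ≤ σ) (hσ1 : σ < 1)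
    (hU : 0 < U) (hUβ : -U < β) (hM : 0 < M)
    (H : ℝ → ℝ)
    (hcont : ContinuousOn H (Set.Icc (-U) β))
    (hest : ∀ u ∈ Set.Ico (-U) β, ∀ u' ∈ Set.Ico (-U) β,
      |H u - H u'| ≤ (M / ((β - u) ^ σ + (β - u') ^ σ)) * |u - u'|) :
    ∀ u ∈ Set.Icc (-U) β, ∀ u' ∈ Set.Icc (-U) β,
      |H u - H u'| ≤ M * |u - u'| ^ (1 - σ) :=
  holder_of_H1_estimate_general σ β U M hσ0 hσ1 hUβ hM H hcont hest
end

section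
/- Let σ ∈ [0,1), β ∈ ℝ, U > 0 with -U < β, and M > 0. Suppose H : ℝ → ℝ is continuous on [-U, β] and satisfies |H(u) - H(û)| ≤ (M / ((β - u)^σ + (β - û)^σ)) · |u - û| for all u, û ∈ [-U, β), and let f : ℝ × ℝ → ℝ be locally Lipschitz continuous. Then the composed function F(u) = f(u, H(u)) satisfies an estimate of the same form: there exists M' > 0 such that |F(u) - F(û)| ≤ (M' / ((β - u)^σ + (β - û)^σ)) · |u - û| for all u, û ∈ [-U, β). -/
/-!
The graph of `H` over `[-U, β]` is compact, so the locally Lipschitz `f` is Lipschitz on it with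
some constant `C`. Hence `|F u - F u'| ≤ C · max (|u - u'|, |H u - H u'|) ≤ C (1 + M / s) |u - u'|`,
where `s = (β - u)^σ + (β - u')^σ`; since `s ≤ 2 (β + U)^σ` on the window, `1 + M / s` is at most
`(2 (β + U)^σ + M) / s`.
-/

open Set NNReal

lemma LipschitzOnWith.dist_comp_graph_le {X Y Z : Type*} [PseudoMetricSpace X]
    [PseudoMetricSpace Y] [PseudoMetricSpace Z] {f : X × Y → Z} {g : X → Y} {s : Set X}
    {C : ℝ≥0} (hf : LipschitzOnWith C f ((fun x ↦ (x, g x)) '' s)) {x x' : X} (hx : x ∈ s)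
    (hx' : x' ∈ s) {w : ℝ} (hw : 1 ≤ w) (hg : dist (g x) (g x') ≤ w * dist x x') :
    dist (f (x, g x)) (f (x', g x')) ≤ C * w * dist x x' := by
  have hgraph : dist (x, g x) (x', g x') ≤ w * dist x x' :=
    max_le (le_mul_of_one_le_left dist_nonneg hw) hg
  calc dist (f (x, g x)) (f (x', g x'))
      ≤ C * dist (x, g x) (x', g x') := hf.dist_le_mul _ (mem_image_of_mem _ hx) _
          (mem_image_of_mem _ hx')
    _ ≤ C * (w * dist x x') := by gcongr
    _ = C * w * dist x x' := by ring

lemma rpow_sub_add_rpow_sub_mem_Ioc {σ β U u u' : ℝ} (hσ : 0 ≤ σ) (hu : u ∈ Ico (-U) β)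
    (hu' : u' ∈ Ico (-U) β) :
    (β - u) ^ σ + (β - u') ^ σ ∈ Ioc 0 (2 * (β + U) ^ σ) := by
  have hle : ∀ v ∈ Ico (-U) β, (β - v) ^ σ ≤ (β + U) ^ σ := fun v hv ↦
    Real.rpow_le_rpow (sub_nonneg.2 hv.2.le) (by linarith [hv.1]) hσ
  exact ⟨add_pos (Real.rpow_pos_of_pos (sub_pos.2 hu.2) σ)
    (Real.rpow_pos_of_pos (sub_pos.2 hu'.2) σ), by linarith [hle u hu, hle u' hu']⟩

theorem composition_satisfies_H1_estimate_general
    (σ β U M : ℝ) (hσ0 : 0 ≤ σ)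
    (hUβ : -U < β) (hM : 0 < M)
    (H : ℝ → ℝ)
    (hcont : ContinuousOn H (Set.Icc (-U) β))
    (hest : ∀ u ∈ Set.Ico (-U) β, ∀ u' ∈ Set.Ico (-U) β,
      |H u - H u'| ≤ (M / ((β - u) ^ σ + (β - u') ^ σ)) * |u - u'|)
    (f : ℝ × ℝ → ℝ) (hf : LocallyLipschitz f) :
    ∃ M' : ℝ, 0 < M' ∧
      ∀ u ∈ Set.Ico (-U) β, ∀ u' ∈ Set.Ico (-U) β,
        |f (u, H u) - f (u', H u')| ≤
          (M' / ((β - u) ^ σ + (β - u') ^ σ)) * |u - u'| := by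
  have hgraph : IsCompact ((fun u ↦ (u, H u)) '' Icc (-U) β) :=
    isCompact_Icc.image_of_continuousOn (continuousOn_id.prodMk hcont)
  obtain ⟨C, hC⟩ := hf.locallyLipschitzOn.exists_lipschitzOnWith_of_compact hgraph
  have hβU : 0 < β + U := by linarith
  -- `C + 1` rather than `C`, since `C` may vanish while `M'` must be positive.
  refine ⟨(C + 1) * (2 * (β + U) ^ σ + M), by positivity, fun u hu u' hu' ↦ ?_⟩
  obtain ⟨hs_pos, hs_le⟩ := rpow_sub_add_rpow_sub_mem_Ioc hσ0 hu hu'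
  set w := 1 + M / ((β - u) ^ σ + (β - u') ^ σ) with hw_def
  have hw : 1 ≤ w := le_add_of_nonneg_right (div_nonneg hM.le hs_pos.le)
  have hH : dist (H u) (H u') ≤ w * dist u u' := by
    rw [Real.dist_eq, Real.dist_eq]
    exact (hest u hu u' hu').trans (by gcongr; exact le_add_of_nonneg_left zero_le_one)
  have hF := hC.dist_comp_graph_le (Ico_subset_Icc_self hu) (Ico_subset_Icc_self hu') hw hH
  rw [Real.dist_eq, Real.dist_eq] at hF
  calc |f (u, H u) - f (u', H u')| ≤ C * w * |u - u'| := hF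
    _ ≤ (C + 1) * ((2 * (β + U) ^ σ + M) / ((β - u) ^ σ + (β - u') ^ σ)) * |u - u'| := by
        gcongr
        · linarith
        · rw [hw_def, one_add_div hs_pos.ne']
          gcongr
    _ = _ := by ring

/-- If H satisfies the H1-estimate on [-U, β) and is continuous
on [-U, β], and f : ℝ × ℝ → ℝ is locally Lipschitz, then F(u) = f(u, H(u))
satisfies an estimate of the same form on [-U, β). -/
theorem composition_satisfies_H1_estimate
    (σ β U M : ℝ) (hσ0 : 0 ≤ σ) (hσ1 : σ < 1)
    (hU : 0 < U) (hUβ : -U < β) (hM : 0 < M)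
    (H : ℝ → ℝ)
    (hcont : ContinuousOn H (Set.Icc (-U) β))
    (hest : ∀ u ∈ Set.Ico (-U) β, ∀ u' ∈ Set.Ico (-U) β,
      |H u - H u'| ≤ (M / ((β - u) ^ σ + (β - u') ^ σ)) * |u - u'|)
    (f : ℝ × ℝ → ℝ) (hf : LocallyLipschitz f) :
    ∃ M' : ℝ, 0 < M' ∧
      ∀ u ∈ Set.Ico (-U) β, ∀ u' ∈ Set.Ico (-U) β,
        |f (u, H u) - f (u', H u')| ≤
          (M' / ((β - u) ^ σ + (β - u') ^ σ)) * |u - u'| :=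
  composition_satisfies_H1_estimate_general σ β U M hσ0 hUβ hM H hcont hest f hf
end

section
/- Let σ ∈ [0,1), α ∈ ℝ, U > 0 with α < U, and M > 0. Suppose H : ℝ → ℝ is continuous on [α, U] and satisfies |H(u) - H(û)| ≤ (M / ((u - α)^σ + (û - α)^σ)) · |u - û| for all u, û ∈ (α, U], and let f : ℝ × ℝ → ℝ be locally Lipschitz continuous. Then the composed function F(u) = f(u, H(u)) satisfies an estimate of the same form: there exists M' > 0 such that |F(u) - F(û)| ≤ (M' / ((u - α)^σ + (û - α)^σ)) · |u - û| for all u, û ∈ (α, U]. -/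
open Set

/-!
Since `σ ≥ 0`, the weight `(u - α) ^ σ + (u' - α) ^ σ` is at most `2 (U - α) ^ σ` on `(α, U]`,
so a plain Lipschitz bound is a weighted one with constant `2 (U - α) ^ σ`. Hence the graph map
`u ↦ (u, H u)` satisfies the weighted estimate with constant `2 (U - α) ^ σ + M`, and composing
with `f`, which is Lipschitz on the compact graph of `H` over `[α, U]`, only multiplies the
constant.
-/
lemma rpow_sub_add_rpow_sub_le_two_mul {σ α U u u' : ℝ} (hσ : 0 ≤ σ)
    (hu : u ∈ Ioc α U) (hu' : u' ∈ Ioc α U) :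
    (u - α) ^ σ + (u' - α) ^ σ ≤ 2 * (U - α) ^ σ := by
  have hle : ∀ v ∈ Ioc α U, (v - α) ^ σ ≤ (U - α) ^ σ := fun v hv =>
    Real.rpow_le_rpow (by linarith [hv.1]) (by linarith [hv.2]) hσ
  linarith [hle u hu, hle u' hu']

lemma dist_prodMk_le_of_abs_sub_le {H : ℝ → ℝ} {u u' w B M : ℝ} (hw : 0 < w) (hwB : w ≤ B)
    (hM : 0 ≤ M) (hH : |H u - H u'| ≤ M / w * |u - u'|) :
    dist (u, H u) (u', H u') ≤ (B + M) / w * |u - u'| := by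
  have hB : 1 ≤ B / w := (one_le_div hw).2 hwB
  have hMw : 0 ≤ M / w := div_nonneg hM hw.le
  rw [Prod.dist_eq, Real.dist_eq, Real.dist_eq, add_div]
  refine max_le ?_ (hH.trans ?_) <;> nlinarith [abs_nonneg (u - u')]

theorem composition_satisfies_H2_estimate_general
    (σ α U M : ℝ) (hσ0 : 0 ≤ σ)
    (hαU : α < U) (hM : 0 < M)
    (H : ℝ → ℝ)
    (hcont : ContinuousOn H (Set.Icc α U))
    (hest : ∀ u ∈ Set.Ioc α U, ∀ u' ∈ Set.Ioc α U,
      |H u - H u'| ≤ (M / ((u - α) ^ σ + (u' - α) ^ σ)) * |u - u'|)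
    (f : ℝ × ℝ → ℝ) (hf : LocallyLipschitz f) :
    ∃ M' : ℝ, 0 < M' ∧
      ∀ u ∈ Set.Ioc α U, ∀ u' ∈ Set.Ioc α U,
        |f (u, H u) - f (u', H u')| ≤
          (M' / ((u - α) ^ σ + (u' - α) ^ σ)) * |u - u'| := by
  set graph : ℝ → ℝ × ℝ := fun u => (u, H u)
  have hgraph : IsCompact (graph '' Icc α U) :=
    isCompact_Icc.image_of_continuousOn (continuousOn_id.prodMk hcont)
  obtain ⟨C, hC⟩ :=
    LocallyLipschitzOn.exists_lipschitzOnWith_of_compact hgraph hf.locallyLipschitzOn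
  -- `C + 1` rather than `C`, so that `M'` is positive even when `C = 0`
  replace hC := hC.weaken (le_add_of_nonneg_right zero_le_one)
  refine ⟨(C + 1) * (2 * (U - α) ^ σ + M), by positivity, fun u hu u' hu' => ?_⟩
  have hw : 0 < (u - α) ^ σ + (u' - α) ^ σ :=
    add_pos (Real.rpow_pos_of_pos (sub_pos.2 hu.1) σ) (Real.rpow_pos_of_pos (sub_pos.2 hu'.1) σ)
  have hmem : ∀ v ∈ Ioc α U, graph v ∈ graph '' Icc α U :=
    fun v hv => mem_image_of_mem graph (Ioc_subset_Icc_self hv)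
  calc |f (u, H u) - f (u', H u')| = dist (f (graph u)) (f (graph u')) :=
        (Real.dist_eq _ _).symm
    _ ≤ (C + 1) * dist (graph u) (graph u') := hC.dist_le_mul _ (hmem u hu) _ (hmem u' hu')
    _ ≤ (C + 1) * ((2 * (U - α) ^ σ + M) / ((u - α) ^ σ + (u' - α) ^ σ) * |u - u'|) := by
        gcongr
        exact dist_prodMk_le_of_abs_sub_le hw (rpow_sub_add_rpow_sub_le_two_mul hσ0 hu hu')
          hM.le (hest u hu u' hu')
    _ = _ := by ring

/-- If H satisfies the H2-estimate on (α, U] and is continuous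
on [α, U], and f : ℝ × ℝ → ℝ is locally Lipschitz, then F(u) = f(u, H(u))
satisfies an estimate of the same form on (α, U]. -/
theorem composition_satisfies_H2_estimate
    (σ α U M : ℝ) (hσ0 : 0 ≤ σ) (hσ1 : σ < 1)
    (hU : 0 < U) (hαU : α < U) (hM : 0 < M)
    (H : ℝ → ℝ)
    (hcont : ContinuousOn H (Set.Icc α U))
    (hest : ∀ u ∈ Set.Ioc α U, ∀ u' ∈ Set.Ioc α U,
      |H u - H u'| ≤ (M / ((u - α) ^ σ + (u' - α) ^ σ)) * |u - u'|)
    (f : ℝ × ℝ → ℝ) (hf : LocallyLipschitz f) :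
    ∃ M' : ℝ, 0 < M' ∧
      ∀ u ∈ Set.Ioc α U, ∀ u' ∈ Set.Ioc α U,
        |f (u, H u) - f (u', H u')| ≤
          (M' / ((u - α) ^ σ + (u' - α) ^ σ)) * |u - u'| :=
  composition_satisfies_H2_estimate_general σ α U M hσ0 hαU hM H hcont hest f hf
end

section
/- Let g : ℝ → ℝ be continuous, let α < β be real numbers, and for t > 0 define X_t = {t' ∈ (0, t] : g(t') = α or g(t') = β}. Let t₀ > 0 and suppose X_{t₀} is nonempty with greatest element m₀. Then there exists δ > 0 such that for every t ∈ [t₀, t₀ + δ], the set X_t is nonempty, has a greatest element m_t, and g(m_t) = g(m₀). -/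
/-!
Since `g` is continuous, the crossing set `Z = g⁻¹' {α, β}` is closed, so once `X t₀` has a greatest
element `m₀`, every `X t = (0, t] ∩ Z` with `t ≥ t₀` has one too: the maximum of the compact set
`[m₀, t] ∩ Z`. Near `t₀` the function `g` cannot reach a threshold value other than `g t₀`. Hence
either the last crossing before `t` is still `m₀`, or it lies in `(t₀, t]`; in the latter case it
has value `g t₀`, so `t₀` is itself a crossing and `m₀ = t₀`.
-/

open Set Filter Topology

section LastPoint

variable {α : Type*} [LinearOrder α] {Z : Set α} {a t₀ t m₀ m : α}

theorem exists_isGreatest_Ioc_inter_of_isClosed [TopologicalSpace α] [CompactIccSpace α]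
    [ClosedIciTopology α] (hZ : IsClosed Z) (hm₀ : m₀ ∈ Ioc a t ∩ Z) :
    ∃ m, IsGreatest (Ioc a t ∩ Z) m := by
  obtain ⟨m, ⟨⟨hm₀m, hmt⟩, hmZ⟩, hm⟩ :=
    (isCompact_Icc.inter_right hZ).exists_isGreatest ⟨m₀, ⟨le_rfl, hm₀.1.2⟩, hm₀.2⟩
  refine ⟨m, ⟨⟨hm₀.1.1.trans_le hm₀m, hmt⟩, hmZ⟩, fun x ⟨⟨_, hxt⟩, hxZ⟩ => ?_⟩
  rcases le_total m₀ x with hm₀x | hxm₀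
  · exact hm ⟨⟨hm₀x, hxt⟩, hxZ⟩
  · exact hxm₀.trans hm₀m

theorem IsGreatest.eq_or_lt_of_Ioc_inter (hm₀ : IsGreatest (Ioc a t₀ ∩ Z) m₀)
    (hm : IsGreatest (Ioc a t ∩ Z) m) (ht : t₀ ≤ t) : m = m₀ ∨ t₀ < m := by
  refine (le_or_gt m t₀).imp (fun hmt₀ => le_antisymm ?_ ?_) id
  · exact hm₀.2 ⟨⟨hm.1.1.1, hmt₀⟩, hm.1.2⟩
  · exact hm.2 ⟨⟨hm₀.1.1.1, hm₀.1.1.2.trans ht⟩, hm₀.1.2⟩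

end LastPoint

theorem ContinuousAt.eventually_mem_imp_eq {X Y : Type*} [TopologicalSpace X] [TopologicalSpace Y]
    [T1Space Y] {f : X → Y} {x : X} {F : Set Y} (hF : F.Finite) (hf : ContinuousAt f x) :
    ∀ᶠ y in 𝓝 x, f y ∈ F → f y = f x := by
  have hnhds : (F \ {f x})ᶜ ∈ 𝓝 (f x) :=
    hF.sdiff.isClosed.isOpen_compl.mem_nhds fun h => h.2 rfl
  filter_upwards [hf hnhds] with y hy hyF
  by_contra hne
  exact hy ⟨hyF, hne⟩

theorem crossing_value_locally_constant_from_right_general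
    (g : ℝ → ℝ) (hg : Continuous g) (α β : ℝ)
    (X : ℝ → Set ℝ)
    (hX : ∀ t : ℝ, X t = {t' : ℝ | t' ∈ Set.Ioc 0 t ∧ (g t' = α ∨ g t' = β)})
    (t₀ : ℝ)
    (m₀ : ℝ) (hm₀ : IsGreatest (X t₀) m₀) :
    ∃ δ : ℝ, 0 < δ ∧ ∀ t ∈ Set.Icc t₀ (t₀ + δ),
      ∃ m : ℝ, IsGreatest (X t) m ∧ g m = g m₀ := by
  set Z := g ⁻¹' {α, β}
  replace hX : ∀ t, X t = Ioc 0 t ∩ Z := hX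
  have hZ : IsClosed Z := (toFinite _).isClosed.preimage hg
  obtain ⟨u, htu, hnear⟩ := nhdsGE_basis_Icc.eventually_iff.1 <| nhdsWithin_le_nhds <|
    hg.continuousAt.eventually_mem_imp_eq (F := {α, β}) (toFinite _)
  refine ⟨u - t₀, sub_pos.2 htu, fun t ⟨ht₀t, htu'⟩ => ?_⟩
  rw [add_sub_cancel] at htu'
  rw [hX] at hm₀ ⊢
  obtain ⟨m, hm⟩ := exists_isGreatest_Ioc_inter_of_isClosed hZ
    ⟨⟨hm₀.1.1.1, hm₀.1.1.2.trans ht₀t⟩, hm₀.1.2⟩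
  refine ⟨m, hm, ?_⟩
  rcases hm₀.eq_or_lt_of_Ioc_inter hm ht₀t with rfl | ht₀m
  · rfl
  have hgm : g m = g t₀ := hnear ⟨ht₀m.le, hm.1.1.2.trans htu'⟩ hm.1.2
  have ht₀X : t₀ ∈ Ioc 0 t₀ ∩ Z :=
    ⟨⟨hm₀.1.1.1.trans_le hm₀.1.1.2, le_rfl⟩, mem_preimage.2 (hgm ▸ hm.1.2)⟩
  rw [hgm, le_antisymm hm₀.1.1.2 (hm₀.2 ht₀X)]

/-- right-continuity (at positive times) of the value of g at the
last threshold-crossing time. -/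
theorem crossing_value_locally_constant_from_right
    (g : ℝ → ℝ) (hg : Continuous g) (α β : ℝ) (hαβ : α < β)
    (X : ℝ → Set ℝ)
    (hX : ∀ t : ℝ, X t = {t' : ℝ | t' ∈ Set.Ioc 0 t ∧ (g t' = α ∨ g t' = β)})
    (t₀ : ℝ) (ht₀ : 0 < t₀)
    (m₀ : ℝ) (hm₀ : IsGreatest (X t₀) m₀) :
    ∃ δ : ℝ, 0 < δ ∧ ∀ t ∈ Set.Icc t₀ (t₀ + δ),
      ∃ m : ℝ, IsGreatest (X t) m ∧ g m = g m₀ :=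
  crossing_value_locally_constant_from_right_general g hg α β X hX t₀ m₀ hm₀
end
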